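/- arXiv:2106.03438 — 3 statements merged into one kernel-verified Lean document; each statement's English description precedes it below -/
import Mathlib

section
/- Let P' be the MCKP reformulation of a DKP instance, and let i be a group such that (c'_{i,2}-c'_{i,1})/(a'_{i,2}-a'_{i,1}) ≥ c'_{i,1}/a'_{i,1} or (c'_{i,3}-c'_{i,1})/(a'_{i,3}-a'_{i,1}) ≥ c'_{i,1}/a'_{i,1} (item (i,1) is LP-dominated). Then there exists an optimal solution of the LP relaxation of P' in which x_{i,1} = 0; equivalently, for every feasible solution x of the LP relaxation there exists a feasible solution x' of the LP relaxation with x'_{i,1} = 0 whose objective value is at least that of x. -/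
open Finset

/-- A discounted 0-1 knapsack (DKP) instance: `m` groups, each group `i`
containing items `3i, 3i+1, 3i+2` with integer profits `c`, weights `a`,
and integer capacity `b`, satisfying the standard DKP assumptions. -/
structure DKP where
  m : ℕ
  c : ℕ → ℤ
  a : ℕ → ℤ
  b : ℤ
  m_pos : 0 < m
  b_pos : 0 < b
  c_pos : ∀ i < m, 0 < c (3*i)
  c_lt1 : ∀ i < m, c (3*i) < c (3*i+1)
  c_lt2 : ∀ i < m, c (3*i+1) < c (3*i+2)
  c_sum : ∀ i < m, c (3*i+2) = c (3*i) + c (3*i+1)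
  a_pos : ∀ i < m, 0 < a (3*i)
  a_lt1 : ∀ i < m, a (3*i) < a (3*i+1)
  a_lt2 : ∀ i < m, a (3*i+1) < a (3*i+2)
  a_tri : ∀ i < m, a (3*i+2) < a (3*i) + a (3*i+1)

/-- Profits of the MCKP reformulation `P'`: a dummy item `(i,0)` with zero
profit, and `c' i k = c (3i+k-1)` for `k = 1,2,3`. -/
def DKP.c' (P : DKP) (i k : ℕ) : ℤ := if k = 0 then 0 else P.c (3*i + (k-1))

/-- Weights of the MCKP reformulation `P'`: a dummy item `(i,0)` with zero
weight, and `a' i k = a (3i+k-1)` for `k = 1,2,3`. -/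
def DKP.a' (P : DKP) (i k : ℕ) : ℤ := if k = 0 then 0 else P.a (3*i + (k-1))

/-- Feasibility for the LP relaxation of the MCKP reformulation `P'`. -/
def DKP.LPfeasible (P : DKP) (x : ℕ → ℕ → ℝ) : Prop :=
  (∀ i < P.m, ∀ k ≤ 3, 0 ≤ x i k ∧ x i k ≤ 1) ∧
  (∀ i < P.m, ∑ k ∈ Finset.range 4, x i k = 1) ∧
  (∑ i ∈ Finset.range P.m, ∑ k ∈ Finset.range 4, (P.a' i k : ℝ) * x i k) ≤ (P.b : ℝ)

/-- Objective value of the LP relaxation of `P'`. -/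
def DKP.LPobj (P : DKP) (x : ℕ → ℕ → ℝ) : ℝ :=
  ∑ i ∈ Finset.range P.m, ∑ k ∈ Finset.range 4, (P.c' i k : ℝ) * x i k

lemma row (P : DKP) (i : ℕ) (hi : i < P.m) (j : ℕ) (hj : j = 2 ∨ j = 3)
    (hkey : (P.c' i 1 : ℝ) * (P.a' i j : ℝ) ≤ (P.c' i j : ℝ) * (P.a' i 1 : ℝ))
    (y : ℕ → ℝ) (hb : ∀ k ≤ 3, 0 ≤ y k ∧ y k ≤ 1) (hs : ∑ k ∈ range 4, y k = 1) :
    ∃ y' : ℕ → ℝ, (∀ k ≤ 3, 0 ≤ y' k ∧ y' k ≤ 1) ∧ (∑ k ∈ range 4, y' k = 1) ∧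
      y' 1 = 0 ∧ (∑ k ∈ range 4, (P.a' i k : ℝ) * y' k = ∑ k ∈ range 4, (P.a' i k : ℝ) * y k) ∧
      (∑ k ∈ range 4, (P.c' i k : ℝ) * y k ≤ ∑ k ∈ range 4, (P.c' i k : ℝ) * y' k) := by
  have ha1 : (0:ℝ) < (P.a' i 1 : ℝ) := by
    have := P.a_pos i hi
    simp only [DKP.a']
    norm_num
    exact_mod_cast this
  have haj : (P.a' i 1 : ℝ) < (P.a' i j : ℝ) := by
    have h1 := P.a_lt1 i hi
    have h2 := P.a_lt2 i hi
    rcases hj with rfl | rfl <;> simp only [DKP.a'] <;> norm_num <;>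
      [exact_mod_cast h1; exact_mod_cast (h1.trans h2)]
  obtain ⟨h0, h0'⟩ := hb 0 (by norm_num)
  obtain ⟨h1, h1'⟩ := hb 1 (by norm_num)
  obtain ⟨h2, h2'⟩ := hb 2 (by norm_num)
  obtain ⟨h3, h3'⟩ := hb 3 (by norm_num)
  have hse : y 0 + y 1 + y 2 + y 3 = 1 := by
    simpa [Finset.sum_range_succ] using hs
  have hajpos : (0:ℝ) < (P.a' i j : ℝ) := ha1.trans haj
  obtain ⟨lam, hla, hlam0⟩ : ∃ lam : ℝ, lam * (P.a' i j : ℝ) = y 1 * (P.a' i 1 : ℝ) ∧ 0 ≤ lam :=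
    ⟨y 1 * (P.a' i 1 : ℝ) / (P.a' i j : ℝ), by field_simp, by positivity⟩
  have hlamt : lam ≤ y 1 := by
    have e1 : y 1 * (P.a' i 1 : ℝ) ≤ y 1 * (P.a' i j : ℝ) :=
      mul_le_mul_of_nonneg_left haj.le h1
    have e3 : lam * (P.a' i j : ℝ) ≤ y 1 * (P.a' i j : ℝ) := by linarith
    exact le_of_mul_le_mul_right e3 hajpos
  have hc1t : (P.c' i 1 : ℝ) * y 1 ≤ (P.c' i j : ℝ) * lam := by
    have e1 := mul_le_mul_of_nonneg_right hkey h1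
    have e2 : (P.c' i j : ℝ) * (y 1 * (P.a' i 1:ℝ)) = (P.c' i j:ℝ) * (lam * (P.a' i j:ℝ)) := by
      rw [hla]
    have e3 : ((P.c' i 1 : ℝ) * y 1) * (P.a' i j : ℝ) ≤ ((P.c' i j : ℝ) * lam) * (P.a' i j : ℝ) := by
      ring_nf at e1 e2 ⊢; linarith
    exact le_of_mul_le_mul_right e3 hajpos
  refine ⟨fun k => if k = 1 then 0 else if k = 0 then y 0 + (y 1 - lam)
    else if k = j then y j + lam else y k, ?_, ?_, by simp, ?_, ?_⟩
  · intro k hk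
    rcases hj with rfl | rfl <;> interval_cases k <;> simp <;> constructor <;> linarith
  · rcases hj with rfl | rfl <;> simp [Finset.sum_range_succ] <;> linarith
  · rcases hj with rfl | rfl <;>
      · simp only [DKP.a'] at hla; norm_num at hla
        simp [Finset.sum_range_succ, DKP.a']; linarith
  · rcases hj with rfl | rfl <;>
      · simp only [DKP.c'] at hc1t; norm_num at hc1t
        simp [Finset.sum_range_succ, DKP.c']; linarith

/-- if item `(i,1)` is LP-dominated (condition (6) or (7) of the
paper holds), then for every feasible solution `x` of the LP relaxation of `P'`
there is a feasible solution `x'` with `x' i 1 = 0` and objective value at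
least that of `x` (equivalently, some optimal LP solution has `x_{i,1} = 0`). -/
theorem stmt0 (P : DKP) (i : ℕ) (hi : i < P.m)
    (hdom :
      ((P.c' i 2 - P.c' i 1 : ℤ) : ℝ) / ((P.a' i 2 - P.a' i 1 : ℤ) : ℝ) ≥
          (P.c' i 1 : ℝ) / (P.a' i 1 : ℝ) ∨
      ((P.c' i 3 - P.c' i 1 : ℤ) : ℝ) / ((P.a' i 3 - P.a' i 1 : ℤ) : ℝ) ≥
          (P.c' i 1 : ℝ) / (P.a' i 1 : ℝ)) :
    ∀ x : ℕ → ℕ → ℝ, P.LPfeasible x →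
      ∃ x' : ℕ → ℕ → ℝ, P.LPfeasible x' ∧ x' i 1 = 0 ∧ P.LPobj x ≤ P.LPobj x' := by
  have ha1 : (0:ℝ) < (P.a' i 1 : ℝ) := by
    have := P.a_pos i hi
    simp only [DKP.a']; norm_num; exact_mod_cast this
  -- extract the key inequality for j = 2 or j = 3
  obtain ⟨j, hj, hkey⟩ : ∃ j, (j = 2 ∨ j = 3) ∧
      (P.c' i 1 : ℝ) * (P.a' i j : ℝ) ≤ (P.c' i j : ℝ) * (P.a' i 1 : ℝ) := by
    rcases hdom with h | h
    · refine ⟨2, Or.inl rfl, ?_⟩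
      have hd : (0:ℝ) < (P.a' i 2 : ℝ) - (P.a' i 1 : ℝ) := by
        have := P.a_lt1 i hi
        simp only [DKP.a']; norm_num
        have : ((P.a (3*i) : ℝ)) < (P.a (3*i+1) : ℝ) := by exact_mod_cast this
        linarith
      rw [ge_iff_le] at h
      push_cast at h
      rw [div_le_div_iff₀ ha1 hd] at h
      nlinarith [h]
    · refine ⟨3, Or.inr rfl, ?_⟩
      have hd : (0:ℝ) < (P.a' i 3 : ℝ) - (P.a' i 1 : ℝ) := by
        have h1 := P.a_lt1 i hi
        have h2 := P.a_lt2 i hi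
        simp only [DKP.a']; norm_num
        have : ((P.a (3*i) : ℝ)) < (P.a (3*i+2) : ℝ) := by exact_mod_cast h1.trans h2
        linarith
      rw [ge_iff_le] at h
      push_cast at h
      rw [div_le_div_iff₀ ha1 hd] at h
      nlinarith [h]
  intro x hx
  obtain ⟨hbnd, hsum, hcap⟩ := hx
  obtain ⟨y', hb', hs', hy1, hwt, hobj⟩ :=
    row P i hi j hj hkey (x i) (hbnd i hi) (hsum i hi)
  refine ⟨fun i' => if i' = i then y' else x i', ⟨?_, ?_, ?_⟩, by simp [hy1], ?_⟩
  · intro i' hi' k hk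
    by_cases h : i' = i
    · subst h; simpa using hb' k hk
    · simpa [h] using hbnd i' hi' k hk
  · intro i' hi'
    by_cases h : i' = i
    · subst h; simpa using hs'
    · simpa [h] using hsum i' hi'
  · refine le_trans (le_of_eq ?_) hcap
    apply Finset.sum_congr rfl
    intro i' _
    by_cases h : i' = i
    · subst h; simpa using hwt
    · simp [h]
  · apply Finset.sum_le_sum
    intro i' _
    by_cases h : i' = i
    · subst h; simpa using hobj
    · simp [h]
end

section
/- Let P' be the MCKP reformulation of a DKP instance, and let i be a group such that (c'_{i,3}-c'_{i,2})/(a'_{i,3}-a'_{i,2}) ≥ (c'_{i,2}-c'_{i,1})/(a'_{i,2}-a'_{i,1}) or (c'_{i,3}-c'_{i,2})/(a'_{i,3}-a'_{i,2}) ≥ c'_{i,2}/a'_{i,2} (item (i,2) is LP-dominated). Then there exists an optimal solution of the LP relaxation of P' in which x_{i,2} = 0; equivalently, for every feasible solution x of the LP relaxation there exists a feasible solution x' of the LP relaxation with x'_{i,2} = 0 whose objective value is at least that of x. -/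
open Finset

/-- Replacing row `i` of a feasible solution by a row `y` that satisfies the
box constraints, sums to 1, has no more weight and at least as much profit,
yields the desired improved solution. -/
lemma DKP.replace_row (P : DKP) (i : ℕ) (hi : i < P.m) (x : ℕ → ℕ → ℝ)
    (hx : P.LPfeasible x) (y : ℕ → ℝ)
    (hy0 : ∀ k ≤ 3, 0 ≤ y k ∧ y k ≤ 1) (hy2 : y 2 = 0)
    (hysum : y 0 + y 1 + y 2 + y 3 = 1)
    (hyw : (P.a' i 0 : ℝ) * y 0 + (P.a' i 1 : ℝ) * y 1 + (P.a' i 2 : ℝ) * y 2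
        + (P.a' i 3 : ℝ) * y 3 ≤
        (P.a' i 0 : ℝ) * x i 0 + (P.a' i 1 : ℝ) * x i 1 + (P.a' i 2 : ℝ) * x i 2
        + (P.a' i 3 : ℝ) * x i 3)
    (hyc : (P.c' i 0 : ℝ) * x i 0 + (P.c' i 1 : ℝ) * x i 1 + (P.c' i 2 : ℝ) * x i 2
        + (P.c' i 3 : ℝ) * x i 3 ≤
        (P.c' i 0 : ℝ) * y 0 + (P.c' i 1 : ℝ) * y 1 + (P.c' i 2 : ℝ) * y 2
        + (P.c' i 3 : ℝ) * y 3) :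
    ∃ x' : ℕ → ℕ → ℝ, P.LPfeasible x' ∧ x' i 2 = 0 ∧ P.LPobj x ≤ P.LPobj x' := by
  obtain ⟨hbox, hsum, hwt⟩ := hx
  refine ⟨fun j k => if j = i then y k else x j k, ⟨?_, ?_, ?_⟩, by simp [hy2], ?_⟩
  · intro j hj k hk
    by_cases hji : j = i
    · simpa [hji] using hy0 k hk
    · simpa [hji] using hbox j hj k hk
  · intro j hj
    by_cases hji : j = i
    · subst hji
      simp only [if_true, eq_self_iff_true, Finset.sum_range_succ,
        Finset.sum_range_zero, if_pos rfl]
      linarith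
    · simpa [hji] using hsum j hj
  · refine le_trans (Finset.sum_le_sum fun j hj => ?_) hwt
    by_cases hji : j = i
    · subst hji
      simp only [if_true, eq_self_iff_true, Finset.sum_range_succ,
        Finset.sum_range_zero, if_pos rfl]
      linarith
    · refine le_of_eq (Finset.sum_congr rfl fun k _ => ?_)
      simp [hji]
  · unfold DKP.LPobj
    refine Finset.sum_le_sum fun j hj => ?_
    by_cases hji : j = i
    · subst hji
      simp only [if_true, eq_self_iff_true, Finset.sum_range_succ,
        Finset.sum_range_zero, if_pos rfl]
      linarith
    · refine le_of_eq (Finset.sum_congr rfl fun k _ => ?_)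
      simp [hji]

/-- if item `(i,2)` is LP-dominated (condition (8) or (9) of the
paper holds), then for every feasible solution `x` of the LP relaxation of `P'`
there is a feasible solution `x'` with `x' i 2 = 0` and objective value at
least that of `x` (equivalently, some optimal LP solution has `x_{i,2} = 0`). -/
theorem stmt1 (P : DKP) (i : ℕ) (hi : i < P.m)
    (hdom :
      ((P.c' i 3 - P.c' i 2 : ℤ) : ℝ) / ((P.a' i 3 - P.a' i 2 : ℤ) : ℝ) ≥
          ((P.c' i 2 - P.c' i 1 : ℤ) : ℝ) / ((P.a' i 2 - P.a' i 1 : ℤ) : ℝ) ∨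
      ((P.c' i 3 - P.c' i 2 : ℤ) : ℝ) / ((P.a' i 3 - P.a' i 2 : ℤ) : ℝ) ≥
          (P.c' i 2 : ℝ) / (P.a' i 2 : ℝ)) :
    ∀ x : ℕ → ℕ → ℝ, P.LPfeasible x →
      ∃ x' : ℕ → ℕ → ℝ, P.LPfeasible x' ∧ x' i 2 = 0 ∧ P.LPobj x ≤ P.LPobj x' := by
  intro x hx
  obtain ⟨hbox, hsum, hwt⟩ := hx
  set A1 : ℝ := (P.a (3*i) : ℝ) with hA1
  set A2 : ℝ := (P.a (3*i+1) : ℝ) with hA2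
  set A3 : ℝ := (P.a (3*i+2) : ℝ) with hA3
  set C1 : ℝ := (P.c (3*i) : ℝ) with hC1
  set C2 : ℝ := (P.c (3*i+1) : ℝ) with hC2
  set C3 : ℝ := (P.c (3*i+2) : ℝ) with hC3
  have ea0 : (P.a' i 0 : ℝ) = 0 := by simp [DKP.a']
  have ea1 : (P.a' i 1 : ℝ) = A1 := by simp [DKP.a', hA1]
  have ea2 : (P.a' i 2 : ℝ) = A2 := by simp [DKP.a', hA2]
  have ea3 : (P.a' i 3 : ℝ) = A3 := by simp [DKP.a', hA3]
  have ec0 : (P.c' i 0 : ℝ) = 0 := by simp [DKP.c']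
  have ec1 : (P.c' i 1 : ℝ) = C1 := by simp [DKP.c', hC1]
  have ec2 : (P.c' i 2 : ℝ) = C2 := by simp [DKP.c', hC2]
  have ec3 : (P.c' i 3 : ℝ) = C3 := by simp [DKP.c', hC3]
  have hA1pos : 0 < A1 := by rw [hA1]; exact_mod_cast P.a_pos i hi
  have hA12 : A1 < A2 := by rw [hA1, hA2]; exact_mod_cast P.a_lt1 i hi
  have hA23 : A2 < A3 := by rw [hA2, hA3]; exact_mod_cast P.a_lt2 i hi
  have hx0 := hbox i hi 0 (by norm_num)
  have hx1 := hbox i hi 1 (by norm_num)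
  have hx2 := hbox i hi 2 (by norm_num)
  have hx3 := hbox i hi 3 (by norm_num)
  have hsumi : x i 0 + x i 1 + x i 2 + x i 3 = 1 := by
    have := hsum i hi
    simp [Finset.sum_range_succ] at this
    linarith
  set t := x i 2 with htdef
  have ht0 : 0 ≤ t := hx2.1
  rcases hdom with h8 | h9
  · -- case (8): replace item 2 by a combination of items 1 and 3
    rw [ge_iff_le] at h8
    push_cast at h8
    rw [ec1, ec2, ec3, ea1, ea2, ea3] at h8
    have hcross : (C2 - C1) * (A3 - A2) ≤ (C3 - C2) * (A2 - A1) := by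
      rw [div_le_div_iff₀ (by linarith) (by linarith)] at h8
      linarith
    set lam : ℝ := (A3 - A2) / (A3 - A1) with hlamdef
    have h31 : (0:ℝ) < A3 - A1 := by linarith
    have hlam1 : lam * (A3 - A1) = A3 - A2 := by
      rw [hlamdef]; field_simp
    have hlam2 : (1 - lam) * (A3 - A1) = A2 - A1 := by linear_combination -hlam1
    have hlam0 : 0 ≤ lam := div_nonneg (by linarith) (by linarith)
    have hlamle : lam ≤ 1 := by
      rw [hlamdef, div_le_one h31]; linarith
    have hp0 : 0 ≤ lam * t := mul_nonneg hlam0 ht0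
    have hq0 : 0 ≤ (1 - lam) * t := mul_nonneg (by linarith) ht0
    have hlt : lam * t ≤ t := mul_le_of_le_one_left ht0 hlamle
    have hlt' : (1 - lam) * t ≤ t := mul_le_of_le_one_left ht0 (by linarith)
    refine P.replace_row i hi x ⟨hbox, hsum, hwt⟩
      (fun k => if k = 2 then 0 else if k = 1 then x i 1 + lam * t
        else if k = 3 then x i 3 + (1 - lam) * t else x i k) ?_ (by norm_num) ?_ ?_ ?_
    · intro k hk
      interval_cases k
      · simpa using hx0
      · norm_num
        constructor
        · linarith [hx1.1]
        · linarith [hx0.1, hx3.1]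
      · norm_num
      · norm_num
        constructor
        · linarith [hx3.1]
        · linarith [hx0.1, hx1.1]
    · norm_num
      linarith
    · simp only [ea0, ea1, ea2, ea3]
      norm_num
      have hw : (lam * t) * (A3 - A1) = (A3 - A2) * t := by
        linear_combination t * hlam1
      linarith [hw]
    · simp only [ec0, ec1, ec2, ec3]
      norm_num
      have hr : (C1 * lam + C3 * (1 - lam)) * (A3 - A1)
          = C1 * (A3 - A2) + C3 * (A2 - A1) := by
        linear_combination C1 * hlam1 + C3 * hlam2
      have hkey : C2 * (A3 - A1) ≤ (C1 * lam + C3 * (1 - lam)) * (A3 - A1) := by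
        rw [hr]; linarith [hcross]
      have hkey2 : C2 ≤ C1 * lam + C3 * (1 - lam) :=
        le_of_mul_le_mul_right hkey h31
      have := mul_le_mul_of_nonneg_right hkey2 ht0
      linarith [this]
  · -- case (9): replace item 2 by a combination of the dummy item and item 3
    rw [ge_iff_le] at h9
    push_cast at h9
    rw [ec2, ec3, ea2, ea3] at h9
    have hA2pos : 0 < A2 := by linarith
    have hA3pos : (0:ℝ) < A3 := by linarith
    have hcross : C2 * A3 ≤ C3 * A2 := by
      rw [div_le_div_iff₀ hA2pos (by linarith)] at h9
      linarith
    set mu : ℝ := (A3 - A2) / A3 with hmudef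
    have hmu1 : mu * A3 = A3 - A2 := by
      rw [hmudef]; field_simp
    have hmu2 : (1 - mu) * A3 = A2 := by linear_combination -hmu1
    have hmu0 : 0 ≤ mu := div_nonneg (by linarith) (by linarith)
    have hmule : mu ≤ 1 := by
      rw [hmudef, div_le_one hA3pos]; linarith
    have hp0 : 0 ≤ mu * t := mul_nonneg hmu0 ht0
    have hq0 : 0 ≤ (1 - mu) * t := mul_nonneg (by linarith) ht0
    have hlt : mu * t ≤ t := mul_le_of_le_one_left ht0 hmule
    have hlt' : (1 - mu) * t ≤ t := mul_le_of_le_one_left ht0 (by linarith)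
    refine P.replace_row i hi x ⟨hbox, hsum, hwt⟩
      (fun k => if k = 2 then 0 else if k = 0 then x i 0 + mu * t
        else if k = 3 then x i 3 + (1 - mu) * t else x i k) ?_ (by norm_num) ?_ ?_ ?_
    · intro k hk
      interval_cases k
      · norm_num
        constructor
        · linarith [hx0.1]
        · linarith [hx1.1, hx3.1]
      · simpa using hx1
      · norm_num
      · norm_num
        constructor
        · linarith [hx3.1]
        · linarith [hx0.1, hx1.1]
    · norm_num
      linarith
    · simp only [ea0, ea1, ea2, ea3]
      norm_num
      have hw : ((1 - mu) * t) * A3 = A2 * t := by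
        linear_combination t * hmu2
      linarith [hw]
    · simp only [ec0, ec1, ec2, ec3]
      norm_num
      have hr : (C3 * (1 - mu)) * A3 = C3 * A2 := by
        linear_combination C3 * hmu2
      have hkey : C2 * A3 ≤ (C3 * (1 - mu)) * A3 := by
        rw [hr]; exact hcross
      have hkey2 : C2 ≤ C3 * (1 - mu) :=
        le_of_mul_le_mul_right hkey hA3pos
      have := mul_le_mul_of_nonneg_right hkey2 ht0
      linarith [this]
end

section
/- Let v be the dynamic programming table of a DKP instance defined by the stage-wise recursion (v_0 given by the four-case base formula and v_i(β) obtained from v_{i−1} by the four-case recurrence comparing v_{i−1}(β) with v_{i−1}(β − a_{3i+k}) + c_{3i+k} for those k ∈ {0,1,2} with a_{3i+k} ≤ β). Then v_{m−1}(b) equals the optimal value of the DKP instance, i.e., the maximum of Σ_j c_j x_j over all feasible 0-1 solutions x of the DKP. -/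
open Finset

/-- Feasible 0-1 solutions of the DKP. -/
def DKP.feasible (P : DKP) (x : ℕ → ℤ) : Prop :=
  (∀ j < 3*P.m, x j = 0 ∨ x j = 1) ∧
  (∀ i < P.m, x (3*i) + x (3*i+1) + x (3*i+2) ≤ 1) ∧
  (∑ j ∈ Finset.range (3*P.m), P.a j * x j) ≤ P.b

/-- Objective value of a DKP solution. -/
def DKP.obj (P : DKP) (x : ℕ → ℤ) : ℤ := ∑ j ∈ Finset.range (3*P.m), P.c j * x j

namespace DKP

lemma a_pos' (P : DKP) {i : ℕ} (hi : i < P.m) {k : ℕ} (hk : k ≤ 2) : 0 < P.a (3*i+k) := by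
  have h0 := P.a_pos i hi
  have h1 := P.a_lt1 i hi
  have h2 := P.a_lt2 i hi
  interval_cases k
  · simpa using h0
  · linarith
  · linarith

lemma c_pos' (P : DKP) {i : ℕ} (hi : i < P.m) {k : ℕ} (hk : k ≤ 2) : 0 < P.c (3*i+k) := by
  have h0 := P.c_pos i hi
  have h1 := P.c_lt1 i hi
  have h2 := P.c_lt2 i hi
  interval_cases k
  · simpa using h0
  · linarith
  · linarith

lemma a'_nonneg (P : DKP) {i : ℕ} (hi : i < P.m) {k : ℕ} (hk : k ≤ 3) : 0 ≤ P.a' i k := by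
  unfold DKP.a'
  rcases Nat.eq_zero_or_pos k with h | h
  · simp [h]
  · rw [if_neg (by omega)]
    exact le_of_lt (P.a_pos' hi (by omega))

lemma sum_range_three (f : ℕ → ℤ) (m : ℕ) :
    ∑ j ∈ Finset.range (3*m), f j
      = ∑ q ∈ Finset.range m, (f (3*q) + f (3*q+1) + f (3*q+2)) := by
  induction m with
  | zero => simp
  | succ n ih =>
    have h3 : 3*(n+1) = (3*n) + 1 + 1 + 1 := by ring
    have e : 3*n+1+1 = 3*n+2 := by ring
    rw [h3, Finset.sum_range_succ, Finset.sum_range_succ, Finset.sum_range_succ, ih,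
        Finset.sum_range_succ, e]
    ring

/-- The set of objective values of partial MCKP solutions using groups `0..n`
with budget `β`. -/
def S (P : DKP) (n : ℕ) (β : ℤ) : Set ℤ :=
  {s : ℤ | ∃ k : ℕ → ℕ, (∀ j, k j ≤ 3) ∧
    (∑ q ∈ Finset.range (n+1), P.a' q (k q)) ≤ β ∧
    s = ∑ q ∈ Finset.range (n+1), P.c' q (k q)}


lemma dp (P : DKP) (v : ℕ → ℤ → ℤ)
    (h00 : ∀ β : ℤ, 0 ≤ β → β < P.a 0 → v 0 β = 0)
    (h01 : ∀ β : ℤ, P.a 0 ≤ β → β < P.a 1 → v 0 β = P.c 0)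
    (h02 : ∀ β : ℤ, P.a 1 ≤ β → β < P.a 2 → v 0 β = P.c 1)
    (h03 : ∀ β : ℤ, P.a 2 ≤ β → β ≤ P.b → v 0 β = P.c 2)
    (hrec : ∀ i, 1 ≤ i → i < P.m → ∀ β : ℤ, 0 ≤ β → β ≤ P.b →
      IsGreatest (insert (v (i-1) β)
        {w : ℤ | ∃ k ≤ 2, P.a (3*i+k) ≤ β ∧ w = v (i-1) (β - P.a (3*i+k)) + P.c (3*i+k)})
        (v i β)) :
    ∀ n, n < P.m → ∀ β : ℤ, 0 ≤ β → β ≤ P.b → IsGreatest (P.S n β) (v n β) := by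
  intro n
  induction n with
  | zero =>
    intro _ β hβ0 hβb
    have ha0 := P.a_pos 0 P.m_pos
    have ha1 := P.a_lt1 0 P.m_pos
    have ha2 := P.a_lt2 0 P.m_pos
    have hc0 := P.c_pos 0 P.m_pos
    have hc1 := P.c_lt1 0 P.m_pos
    have hc2 := P.c_lt2 0 P.m_pos
    norm_num at ha0 ha1 ha2 hc0 hc1 hc2
    have hub : ∀ s ∈ P.S 0 β, ∀ w : ℤ,
        (0 ≤ w) → (P.a 0 ≤ β → P.c 0 ≤ w) → (P.a 1 ≤ β → P.c 1 ≤ w) →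
        (P.a 2 ≤ β → P.c 2 ≤ w) → s ≤ w := by
      rintro s ⟨k, hk3, hw, hs⟩ w hw0 hw1 hw2 hw3
      rw [Finset.sum_range_one] at hw hs
      have hk := hk3 0
      interval_cases h : k 0 <;>
        simp only [DKP.a', DKP.c', h] at hw hs <;> norm_num at hw hs <;> subst hs
      · exact hw0
      · exact hw1 hw
      · exact hw2 hw
      · exact hw3 hw
    rcases lt_or_ge β (P.a 0) with h | h0
    · rw [h00 β hβ0 h]
      constructor
      · exact ⟨fun _ => 0, by norm_num, by simp [DKP.a', hβ0], by simp [DKP.c']⟩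
      · intro s hs
        exact hub s hs 0 le_rfl (by intro h'; linarith) (by intro h'; linarith)
          (by intro h'; linarith)
    rcases lt_or_ge β (P.a 1) with h | h1
    · rw [h01 β h0 h]
      constructor
      · exact ⟨fun _ => 1, by norm_num, by simp [DKP.a', h0], by simp [DKP.c']⟩
      · intro s hs
        exact hub s hs (P.c 0) (le_of_lt hc0) (fun _ => le_rfl) (by intro h'; linarith)
          (by intro h'; linarith)
    rcases lt_or_ge β (P.a 2) with h | h2
    · rw [h02 β h1 h]
      constructor
      · exact ⟨fun _ => 2, by norm_num, by simp [DKP.a', h1], by simp [DKP.c']⟩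
      · intro s hs
        exact hub s hs (P.c 1) (by linarith) (fun _ => by linarith) (fun _ => le_rfl)
          (by intro h'; linarith)
    · rw [h03 β h2 hβb]
      constructor
      · exact ⟨fun _ => 3, by norm_num, by simp [DKP.a', h2], by simp [DKP.c']⟩
      · intro s hs
        exact hub s hs (P.c 2) (by linarith) (fun _ => by linarith) (fun _ => by linarith)
          (fun _ => le_rfl)
  | succ n ih =>
    intro hn1 β hβ0 hβb
    have hnm : n < P.m := by omega
    have H := hrec (n+1) (by omega) hn1 β hβ0 hβb
    simp only [Nat.add_sub_cancel] at H
    constructor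
    · -- membership
      rcases Set.mem_insert_iff.mp H.1 with hG | ⟨k, hk2, hak, hG⟩
      · obtain ⟨kf, hk3, hw, hs⟩ := (ih hnm β hβ0 hβb).1
        refine ⟨Function.update kf (n+1) 0, ?_, ?_, ?_⟩
        · intro j
          rcases eq_or_ne j (n+1) with h | h
          · subst h; simp
          · simpa [Function.update_apply, h] using hk3 j
        · rw [Finset.sum_range_succ,
            Finset.sum_congr rfl (fun q hq => by
              rw [Function.update_apply, if_neg (by simp at hq; omega)])]
          simpa [DKP.a'] using hw
        · rw [hG, Finset.sum_range_succ,
            Finset.sum_congr rfl (fun q hq => by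
              rw [Function.update_apply, if_neg (by simp at hq; omega)])]
          simpa [DKP.c'] using hs
      · have hA := P.a_pos' hn1 hk2
        obtain ⟨kf, hk3, hw, hs⟩ := (ih hnm (β - P.a (3*(n+1)+k)) (by linarith)
          (by linarith)).1
        refine ⟨Function.update kf (n+1) (k+1), ?_, ?_, ?_⟩
        · intro j
          rcases eq_or_ne j (n+1) with h | h
          · subst h; simp; omega
          · simpa [Function.update_apply, h] using hk3 j
        · rw [Finset.sum_range_succ,
            Finset.sum_congr rfl (fun q hq => by
              rw [Function.update_apply, if_neg (by simp at hq; omega)])]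
          have : P.a' (n+1) (Function.update kf (n+1) (k+1) (n+1)) = P.a (3*(n+1)+k) := by
            simp [DKP.a']
          rw [this]
          linarith
        · rw [hG, Finset.sum_range_succ,
            Finset.sum_congr rfl (fun q hq => by
              rw [Function.update_apply, if_neg (by simp at hq; omega)])]
          have : P.c' (n+1) (Function.update kf (n+1) (k+1) (n+1)) = P.c (3*(n+1)+k) := by
            simp [DKP.c']
          rw [this, hs]
    · -- upper bound
      rintro s ⟨kf, hk3, hw, hs⟩
      rw [Finset.sum_range_succ] at hw hs
      have hpre : 0 ≤ ∑ q ∈ Finset.range (n+1), P.a' q (kf q) :=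
        Finset.sum_nonneg (fun q hq => P.a'_nonneg (by simp at hq; omega) (hk3 q))
      rcases Nat.eq_zero_or_pos (kf (n+1)) with h0 | hpos
      · have hterm : P.a' (n+1) (kf (n+1)) = 0 := by simp [DKP.a', h0]
        have hcterm : P.c' (n+1) (kf (n+1)) = 0 := by simp [DKP.c', h0]
        have hmem : s ∈ P.S n β := ⟨kf, hk3, by linarith, by rw [hs, hcterm, add_zero]⟩
        have h1 : s ≤ v n β := (ih hnm β hβ0 hβb).2 hmem
        have h2 : v n β ≤ v (n+1) β := H.2 (Set.mem_insert _ _)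
        linarith
      · set κ := kf (n+1) with hκdef
        have hκ3 : κ ≤ 3 := hk3 (n+1)
        have hκeq : κ = (κ - 1) + 1 := by omega
        have hk'2 : κ - 1 ≤ 2 := by omega
        have ha' : P.a' (n+1) κ = P.a (3*(n+1)+(κ-1)) := by
          rw [DKP.a', if_neg (by omega)]
        have hc' : P.c' (n+1) κ = P.c (3*(n+1)+(κ-1)) := by
          rw [DKP.c', if_neg (by omega)]
        rw [ha'] at hw
        rw [hc'] at hs
        have hA := P.a_pos' hn1 hk'2
        have hAβ : P.a (3*(n+1)+(κ-1)) ≤ β := by linarith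
        have hmem : (s - P.c (3*(n+1)+(κ-1))) ∈ P.S n (β - P.a (3*(n+1)+(κ-1))) :=
          ⟨kf, hk3, by linarith, by rw [hs]; ring⟩
        have h1 : s - P.c (3*(n+1)+(κ-1)) ≤ v n (β - P.a (3*(n+1)+(κ-1))) :=
          (ih hnm _ (by linarith) (by linarith)).2 hmem
        have h2 : v n (β - P.a (3*(n+1)+(κ-1))) + P.c (3*(n+1)+(κ-1)) ≤ v (n+1) β :=
          H.2 (Set.mem_insert_iff.mpr (Or.inr ⟨κ-1, hk'2, hAβ, rfl⟩))
        linarith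


/-- Per-group value identity for the `x ↦ k` direction. -/
lemma group_fwd (P : DKP) (x : ℕ → ℤ) (q : ℕ) (hq : q < P.m)
    (b0 : x (3*q) = 0 ∨ x (3*q) = 1) (b1 : x (3*q+1) = 0 ∨ x (3*q+1) = 1)
    (b2 : x (3*q+2) = 0 ∨ x (3*q+2) = 1)
    (hg : x (3*q) + x (3*q+1) + x (3*q+2) ≤ 1) :
    P.a' q (if x (3*q) = 1 then 1 else if x (3*q+1) = 1 then 2
        else if x (3*q+2) = 1 then 3 else 0)
      = P.a (3*q) * x (3*q) + P.a (3*q+1) * x (3*q+1) + P.a (3*q+2) * x (3*q+2)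
    ∧ P.c' q (if x (3*q) = 1 then 1 else if x (3*q+1) = 1 then 2
        else if x (3*q+2) = 1 then 3 else 0)
      = P.c (3*q) * x (3*q) + P.c (3*q+1) * x (3*q+1) + P.c (3*q+2) * x (3*q+2) := by
  rcases b0 with e0 | e0 <;> rcases b1 with e1 | e1 <;> rcases b2 with e2 | e2 <;>
    rw [e0, e1, e2] at hg ⊢ <;>
    first
      | omega
      | (constructor <;> norm_num [DKP.a', DKP.c'] <;> ring)


/-- Per-group value identity for the `k ↦ x` direction. -/
lemma group_bwd (P : DKP) (k : ℕ → ℕ) (f : ℕ → ℤ) (q : ℕ) (hκ : k q ≤ 3) :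
    f (3*q) * (if k ((3*q)/3) = (3*q)%3+1 then (1:ℤ) else 0)
    + f (3*q+1) * (if k ((3*q+1)/3) = (3*q+1)%3+1 then (1:ℤ) else 0)
    + f (3*q+2) * (if k ((3*q+2)/3) = (3*q+2)%3+1 then (1:ℤ) else 0)
    = if k q = 0 then 0 else f (3*q + (k q - 1)) := by
  have d0 : (3*q)/3 = q := by omega
  have d1 : (3*q+1)/3 = q := by omega
  have d2 : (3*q+2)/3 = q := by omega
  have m0 : (3*q)%3 = 0 := by omega
  have m1 : (3*q+1)%3 = 1 := by omega
  have m2 : (3*q+2)%3 = 2 := by omega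
  rw [d0, d1, d2, m0, m1, m2]
  interval_cases h : k q <;> norm_num


end DKP


/-- the dynamic programming table of a DKP instance (base formula
at stage `0`, and at stage `i ≥ 1` the value `v i β` is the maximum of
`v (i-1) β` and the values `v (i-1) (β - a (3i+k)) + c (3i+k)` over those
`k ∈ {0,1,2}` with `a (3i+k) ≤ β`) satisfies: `v (m-1) b` is the optimal
value of the DKP instance. -/
theorem stmt9 (P : DKP) (hab : ∀ i < P.m, P.a (3*i+2) ≤ P.b)
    (v : ℕ → ℤ → ℤ)
    (h00 : ∀ β : ℤ, 0 ≤ β → β < P.a 0 → v 0 β = 0)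
    (h01 : ∀ β : ℤ, P.a 0 ≤ β → β < P.a 1 → v 0 β = P.c 0)
    (h02 : ∀ β : ℤ, P.a 1 ≤ β → β < P.a 2 → v 0 β = P.c 1)
    (h03 : ∀ β : ℤ, P.a 2 ≤ β → β ≤ P.b → v 0 β = P.c 2)
    (hrec : ∀ i, 1 ≤ i → i < P.m → ∀ β : ℤ, 0 ≤ β → β ≤ P.b →
      IsGreatest (insert (v (i-1) β)
        {w : ℤ | ∃ k ≤ 2, P.a (3*i+k) ≤ β ∧ w = v (i-1) (β - P.a (3*i+k)) + P.c (3*i+k)})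
        (v i β)) :
    IsGreatest {s : ℤ | ∃ x : ℕ → ℤ, P.feasible x ∧ s = P.obj x} (v (P.m - 1) P.b) := by
  have hm : P.m - 1 + 1 = P.m := Nat.succ_pred_eq_of_pos P.m_pos
  have key := DKP.dp P v h00 h01 h02 h03 hrec (P.m - 1) (by omega) P.b
    (le_of_lt P.b_pos) le_rfl
  have hset : {s : ℤ | ∃ x : ℕ → ℤ, P.feasible x ∧ s = P.obj x} = P.S (P.m - 1) P.b := by
    ext s
    simp only [DKP.S, Set.mem_setOf_eq, hm]
    constructor
    · rintro ⟨x, ⟨hx01, hgrp, hwt⟩, hobj⟩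
      refine ⟨fun q => if x (3*q) = 1 then 1 else if x (3*q+1) = 1 then 2
        else if x (3*q+2) = 1 then 3 else 0, ?_, ?_, ?_⟩
      · intro j; dsimp only; split_ifs <;> omega
      · have := fun q (hq : q ∈ Finset.range P.m) =>
          (P.group_fwd x q (Finset.mem_range.mp hq)
            (hx01 (3*q) (by have := Finset.mem_range.mp hq; omega))
            (hx01 (3*q+1) (by have := Finset.mem_range.mp hq; omega))
            (hx01 (3*q+2) (by have := Finset.mem_range.mp hq; omega))
            (hgrp q (Finset.mem_range.mp hq))).1
        calc ∑ q ∈ Finset.range P.m, P.a' q _ = ∑ j ∈ Finset.range (3*P.m), P.a j * x j := by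
              rw [DKP.sum_range_three]
              exact Finset.sum_congr rfl this
          _ ≤ P.b := hwt
      · have := fun q (hq : q ∈ Finset.range P.m) =>
          (P.group_fwd x q (Finset.mem_range.mp hq)
            (hx01 (3*q) (by have := Finset.mem_range.mp hq; omega))
            (hx01 (3*q+1) (by have := Finset.mem_range.mp hq; omega))
            (hx01 (3*q+2) (by have := Finset.mem_range.mp hq; omega))
            (hgrp q (Finset.mem_range.mp hq))).2
        rw [hobj, DKP.obj, DKP.sum_range_three]
        exact (Finset.sum_congr rfl this).symm
    · rintro ⟨k, hk3, hw, hs⟩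
      refine ⟨fun j => if k (j/3) = j%3+1 then 1 else 0, ⟨?_, ?_, ?_⟩, ?_⟩
      · intro j _; dsimp only; split_ifs <;> simp
      · intro q hq
        have d0 : (3*q)/3 = q := by omega
        have d1 : (3*q+1)/3 = q := by omega
        have d2 : (3*q+2)/3 = q := by omega
        have m0 : (3*q)%3 = 0 := by omega
        have m1 : (3*q+1)%3 = 1 := by omega
        have m2 : (3*q+2)%3 = 2 := by omega
        dsimp only
        rw [d0, d1, d2, m0, m1, m2]
        split_ifs <;> omega
      · rw [DKP.sum_range_three]
        calc ∑ q ∈ Finset.range P.m,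
              (P.a (3*q) * (if k ((3*q)/3) = (3*q)%3+1 then (1:ℤ) else 0)
              + P.a (3*q+1) * (if k ((3*q+1)/3) = (3*q+1)%3+1 then (1:ℤ) else 0)
              + P.a (3*q+2) * (if k ((3*q+2)/3) = (3*q+2)%3+1 then (1:ℤ) else 0))
            = ∑ q ∈ Finset.range P.m, P.a' q (k q) := by
              refine Finset.sum_congr rfl (fun q hq => ?_)
              rw [DKP.group_bwd P k P.a q (hk3 q)]
              rfl
          _ ≤ P.b := hw
      · rw [DKP.obj, DKP.sum_range_three, hs]
        refine Finset.sum_congr rfl (fun q hq => ?_)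
        rw [DKP.group_bwd P k P.c q (hk3 q)]
        rfl
  rw [hset]
  exact key
end
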